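/- arXiv:1902.05798 — 4 statements merged into one kernel-verified Lean document; each statement's English description precedes it below -/
import Mathlib

section
/- Let Ω, λ, u, h, Γ_h^−, Γ_h^+, ν⁻ be as in the context, where now θ₀ = απ with α ∈ (0,2) irrational. Suppose Γ_h^− is a singular line of u, i.e., ∇u(x)·ν⁻ = 0 for all x ∈ Γ_h^−, and Γ_h^+ is a nodal line of u, i.e., u(x) = 0 for all x ∈ Γ_h^+. Then u has infinite vanishing order at 0: every partial derivative of u of every order vanishes at 0. -/
/-- First partial derivative of `u : ℝ × ℝ → ℂ` in the `x₁` direction. -/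
noncomputable def pd1 (u : ℝ × ℝ → ℂ) : ℝ × ℝ → ℂ := fun x => fderiv ℝ u x (1, 0)

/-- First partial derivative of `u : ℝ × ℝ → ℂ` in the `x₂` direction. -/
noncomputable def pd2 (u : ℝ × ℝ → ℂ) : ℝ × ℝ → ℂ := fun x => fderiv ℝ u x (0, 1)

/-!
Write `c a b := (∂₁ ^ a ∂₂ ^ b u) 0`. The Helmholtz equation gives
`c (a + 2) b + c a (b + 2) + λ c a b = 0`, the singular line gives `c n 1 = 0`, and the nodal
line gives `∑ k, (N choose k) cos ^ k θ₀ sin ^ (N - k) θ₀ c k (N - k) = 0`: all derivatives of `u`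
along a ray vanish at `0` once `u` vanishes on an initial segment of the ray. By induction on the
order `N = a + b`, the first two relations force `c a b = c N 0 * Re (i ^ b)`, and then the third
one reads `c N 0 * cos (N θ₀) = 0`. Since `θ₀ / π` is irrational, `cos (N θ₀) ≠ 0`, so all Taylor
coefficients of `u` at `0` vanish.
-/

open Set Filter Topology Complex

namespace HelmholtzVanishingOrder

lemma indicator_eventuallyEq_of_isOpen {X M : Type*} [TopologicalSpace X] [Zero M] {U : Set X}
    (hU : IsOpen U) {x : X} (hx : x ∈ U) (f : X → M) : U.indicator f =ᶠ[𝓝 x] f :=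
  eventually_of_mem (hU.mem_nhds hx) fun _ hy => indicator_of_mem hy f

section Calculus

variable {E F : Type*} [NormedAddCommGroup E] [NormedSpace ℝ E]
  [NormedAddCommGroup F] [NormedSpace ℝ F] {U : Set E}

lemma fderiv_fderiv_apply {w : E → F} {x : E} (hw : DifferentiableAt ℝ (fderiv ℝ w) x)
    (v v' : E) : fderiv ℝ (fun y => fderiv ℝ w y v') x v = fderiv ℝ (fderiv ℝ w) x v v' := by
  rw [show (fun y => fderiv ℝ w y v') = ContinuousLinearMap.apply ℝ F v' ∘ fderiv ℝ w from rfl,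
    fderiv_comp x (ContinuousLinearMap.differentiableAt _) hw, ContinuousLinearMap.fderiv]
  rfl

lemma iteratedFDeriv_succ_apply_right_eq_fderiv_apply {w : E → F} {x : E} {n : ℕ}
    (hw : ContDiffAt ℝ (n + 1) w x) (m : Fin (n + 1) → E) :
    iteratedFDeriv ℝ (n + 1) w x m
      = iteratedFDeriv ℝ n (fun y => fderiv ℝ w y (m (Fin.last n))) x (Fin.init m) := by
  rw [iteratedFDeriv_succ_apply_right, show (fun y => fderiv ℝ w y (m (Fin.last n)))
      = ContinuousLinearMap.apply ℝ F (m (Fin.last n)) ∘ fderiv ℝ w from rfl,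
    ContinuousLinearMap.iteratedFDeriv_comp_left _ hw.fderiv_right_succ le_rfl]
  rfl

lemma iteratedFDeriv_comp_clm_of_isOpen {G : Type*} [NormedAddCommGroup G] [NormedSpace ℝ G]
    {w : E → F} {n : WithTop ℕ∞} (hU : IsOpen U) (hw : ContDiffOn ℝ n w U) (g : G →L[ℝ] E)
    {x : G} (hx : g x ∈ U) {i : ℕ} (hi : i ≤ n) :
    iteratedFDeriv ℝ i (w ∘ g) x
      = (iteratedFDeriv ℝ i w (g x)).compContinuousLinearMap fun _ => g := by
  have hU' : IsOpen (g ⁻¹' U) := hU.preimage g.continuous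
  rw [← iteratedFDerivWithin_of_isOpen i hU' hx, ← iteratedFDerivWithin_of_isOpen i hU hx]
  exact g.iteratedFDerivWithin_comp_right hw hU.uniqueDiffOn hU'.uniqueDiffOn hx hi

lemma iteratedFDeriv_apply_diag_eq_zero_of_ray {w : E → F} (hU : IsOpen U)
    (hw : AnalyticOnNhd ℝ w U) (h0 : 0 ∈ U) {v : E} (hz : ∀ᶠ t in 𝓝[>] (0 : ℝ), w (t • v) = 0)
    (n : ℕ) :
    iteratedFDeriv ℝ n w 0 (fun _ => v) = 0 := by
  set ℓ := ContinuousLinearMap.toSpanSingleton ℝ v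
  have hℓ0 : ℓ 0 ∈ U := by simpa using h0
  have hwℓ : AnalyticAt ℝ (w ∘ ℓ) 0 := (hw _ hℓ0).comp (ℓ.analyticAt 0)
  have hfreq : ∃ᶠ t in 𝓝[≠] (0 : ℝ), (w ∘ ℓ) t = 0 :=
    (hz.frequently.filter_mono (nhdsGT_le_nhdsNE 0)).mono fun t ht => by simpa [ℓ] using ht
  have hzero : iteratedFDeriv ℝ n (w ∘ ℓ) 0 = 0 := by
    have hev : w ∘ ℓ =ᶠ[𝓝 0] 0 := hwℓ.frequently_zero_iff_eventually_zero.mp hfreq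
    rw [(hev.iteratedFDeriv ℝ n).eq_of_nhds]
    simp
  have := congrArg (fun A => A fun _ => (1 : ℝ)) <|
    iteratedFDeriv_comp_clm_of_isOpen hU (hw.contDiffOn hU.uniqueDiffOn) ℓ hℓ0
      (le_refl (n : WithTop ℕ∞))
  simpa [hzero, ℓ] using this.symm

variable [CompleteSpace F]

lemma iteratedFDeriv_eq_zero_of_apply_diag_eq_zero {w : E → F} {x : E} (hw : AnalyticAt ℝ w x)
    (h : ∀ n y, iteratedFDeriv ℝ n w x (fun _ => y) = 0) (n : ℕ) : iteratedFDeriv ℝ n w x = 0 := by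
  obtain ⟨p, r, hp⟩ := hw
  have hzero₀ : ∀ᶠ y in 𝓝 (0 : E), w (x + y) = 0 :=
    eventually_of_mem (Metric.eball_mem_nhds 0 hp.r_pos) fun y hy =>
      (hp.hasSum_iteratedFDeriv hy).unique (by simp [h, hasSum_zero])
  have hzero : w =ᶠ[𝓝 x] 0 := by
    simpa [EventuallyEq] using
      ((continuous_sub_right x).tendsto' x 0 (sub_self x)).eventually hzero₀
  rw [(hzero.iteratedFDeriv ℝ n).eq_of_nhds]
  simp

end Calculus

section PartialDeriv

variable {E F : Type*} [NormedAddCommGroup E] [NormedSpace ℝ E]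
  [NormedAddCommGroup F] [NormedSpace ℝ F] [CompleteSpace F] {U : Set E}

variable (F) in
def analyticOnNhdSubmodule (U : Set E) : Submodule ℝ (E → F) where
  carrier := {w | AnalyticOnNhd ℝ w U}
  add_mem' hf hg := hf.add hg
  zero_mem' := analyticOnNhd_const
  smul_mem' _ _ hw := hw.const_smul

lemma analyticOnNhd_indicator_fderiv_apply (hU : IsOpen U) {w : E → F}
    (hw : AnalyticOnNhd ℝ w U) (v : E) :
    AnalyticOnNhd ℝ (U.indicator fun x => fderiv ℝ w x v) U := fun x hx =>
  (((ContinuousLinearMap.apply ℝ F v).analyticAt _).comp (hw x hx).fderiv).congr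
    (indicator_eventuallyEq_of_isOpen hU hx _).symm

/-- `∂_v`, cut off to `0` outside `U` so that it is linear and the `∂_v` commute exactly, not
only on `U`. -/
noncomputable def partialDeriv (hU : IsOpen U) :
    E →ₗ[ℝ] Module.End ℝ (analyticOnNhdSubmodule F U) where
  toFun v :=
    { toFun w := ⟨U.indicator fun x => fderiv ℝ (w : E → F) x v,
        analyticOnNhd_indicator_fderiv_apply hU w.2 v⟩
      map_add' f g := by
        ext x
        by_cases hx : x ∈ U
        · simp [indicator_of_mem hx, fderiv_add ((f.2 x hx).differentiableAt)
            ((g.2 x hx).differentiableAt)]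
        · simp [indicator_of_notMem hx]
      map_smul' c f := by
        ext x
        by_cases hx : x ∈ U
        · simp [indicator_of_mem hx, fderiv_const_smul ((f.2 x hx).differentiableAt)]
        · simp [indicator_of_notMem hx] }
  map_add' v v' := by
    ext w x
    by_cases hx : x ∈ U <;> simp [indicator_of_mem, indicator_of_notMem, hx]
  map_smul' c v := by
    ext w x
    by_cases hx : x ∈ U <;> simp [indicator_of_mem, indicator_of_notMem, hx]

variable (hU : IsOpen U) {x : E} {w : analyticOnNhdSubmodule F U}

lemma partialDeriv_apply_of_mem (hx : x ∈ U) (v : E) :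
    (partialDeriv hU v w : E → F) x = fderiv ℝ (w : E → F) x v :=
  indicator_of_mem hx fun y => fderiv ℝ (w : E → F) y v

lemma partialDeriv_apply_of_notMem (hx : x ∉ U) (v : E) :
    (partialDeriv hU v w : E → F) x = 0 :=
  indicator_of_notMem hx fun y => fderiv ℝ (w : E → F) y v

lemma partialDeriv_eventuallyEq (hx : x ∈ U) (v : E) :
    (partialDeriv hU v w : E → F) =ᶠ[𝓝 x] fun y => fderiv ℝ (w : E → F) y v :=
  indicator_eventuallyEq_of_isOpen hU hx _

lemma partialDeriv_partialDeriv_apply (hx : x ∈ U) (v v' : E) :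
    (partialDeriv hU v (partialDeriv hU v' w) : E → F) x
      = fderiv ℝ (fderiv ℝ (w : E → F)) x v v' := by
  rw [partialDeriv_apply_of_mem hU hx, (partialDeriv_eventuallyEq hU hx v').fderiv_eq,
    fderiv_fderiv_apply (w.2 x hx).fderiv.differentiableAt]

lemma commute_partialDeriv (v v' : E) :
    Commute (partialDeriv (F := F) hU v) (partialDeriv hU v') := by
  ext w x
  by_cases hx : x ∈ U
  · simp only [Module.End.mul_apply]
    rw [partialDeriv_partialDeriv_apply hU hx, partialDeriv_partialDeriv_apply hU hx,
      (((w.2 x hx).contDiffAt (n := 2)).isSymmSndFDerivAt (by simp)).eq]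
  · simp only [Module.End.mul_apply]
    rw [partialDeriv_apply_of_notMem hU hx, partialDeriv_apply_of_notMem hU hx]

lemma partialDeriv_eq_zero_of_eqOn (h : EqOn (w : E → F) 0 U) (v : E) :
    partialDeriv hU v w = 0 := by
  ext x
  by_cases hx : x ∈ U
  · have hw : (w : E → F) =ᶠ[𝓝 x] 0 := eventually_of_mem (hU.mem_nhds hx) h
    simp [partialDeriv_apply_of_mem hU hx, hw.fderiv_eq]
  · exact partialDeriv_apply_of_notMem hU hx v

lemma eqOn_pow_partialDeriv_apply (h : EqOn (w : E → F) 0 U) (v : E) (n : ℕ) :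
    EqOn ((partialDeriv hU v ^ n) w : E → F) 0 U := by
  cases n with
  | zero => exact h
  | succ n => simp [pow_succ, partialDeriv_eq_zero_of_eqOn hU h, eqOn_refl]

lemma iteratedFDeriv_apply_diag_eq_pow_partialDeriv (hx : x ∈ U) (v : E) (n : ℕ)
    (w : analyticOnNhdSubmodule F U) :
    iteratedFDeriv ℝ n (w : E → F) x (fun _ => v) = ((partialDeriv hU v ^ n) w : E → F) x := by
  induction n generalizing w with
  | zero => simp
  | succ n ih =>
    rw [iteratedFDeriv_succ_apply_right_eq_fderiv_apply (w.2 x hx).contDiffAt,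
      ← ((partialDeriv_eventuallyEq hU hx v).iteratedFDeriv ℝ n).eq_of_nhds]
    exact (ih _).trans (by rw [pow_succ, Module.End.mul_apply])

lemma pow_partialDeriv_apply_zero_of_ray (h0 : 0 ∈ U) {v : E}
    (hz : ∀ᶠ t in 𝓝[>] (0 : ℝ), (w : E → F) (t • v) = 0) (n : ℕ) :
    ((partialDeriv hU v ^ n) w : E → F) 0 = 0 := by
  rw [← iteratedFDeriv_apply_diag_eq_pow_partialDeriv hU h0]
  exact iteratedFDeriv_apply_diag_eq_zero_of_ray hU w.2 h0 hz n

lemma pow_partialDeriv_partialDeriv_apply_zero_of_ray (h0 : 0 ∈ U) {v v' : E}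
    (hz : ∀ᶠ t in 𝓝[>] (0 : ℝ), fderiv ℝ (w : E → F) (t • v) v' = 0) (n : ℕ) :
    ((partialDeriv hU v ^ n) (partialDeriv hU v' w) : E → F) 0 = 0 := by
  refine pow_partialDeriv_apply_zero_of_ray hU h0 (hz.mono fun t ht => ?_) n
  by_cases ht' : t • v ∈ U
  · rw [partialDeriv_apply_of_mem hU ht', ht]
  · exact partialDeriv_apply_of_notMem hU ht' v'

end PartialDeriv

section Plane

variable {F : Type*} [NormedAddCommGroup F] [NormedSpace ℝ F] [CompleteSpace F]
  {U : Set (ℝ × ℝ)} (hU : IsOpen U)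

noncomputable def mixedPartial (a b : ℕ) : Module.End ℝ (analyticOnNhdSubmodule F U) :=
  partialDeriv hU (1, 0) ^ a * partialDeriv hU (0, 1) ^ b

lemma pow_partialDeriv_eq_sum (v : ℝ × ℝ) (n : ℕ) :
    partialDeriv (F := F) hU v ^ n
      = ∑ k ∈ Finset.range (n + 1),
          (v.1 ^ k * v.2 ^ (n - k) * n.choose k) • mixedPartial hU k (n - k) := by
  have hv : v = v.1 • ((1 : ℝ), (0 : ℝ)) + v.2 • ((0 : ℝ), (1 : ℝ)) := by simp
  conv_lhs => rw [hv, map_add, map_smul, map_smul,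
    (((commute_partialDeriv hU _ _).smul_left v.1).smul_right v.2).add_pow]
  refine Finset.sum_congr rfl fun k _ => ?_
  rw [smul_pow, smul_pow, smul_mul_smul_comm, smul_mul_assoc, ← nsmul_eq_mul',
    ← Nat.cast_smul_eq_nsmul ℝ, smul_smul, mixedPartial]

lemma pow_partialDeriv_apply_eq_sum (v : ℝ × ℝ) (n : ℕ) (w : analyticOnNhdSubmodule F U)
    (x : ℝ × ℝ) :
    ((partialDeriv hU v ^ n) w : ℝ × ℝ → F) x = ∑ k ∈ Finset.range (n + 1),
      (v.1 ^ k * v.2 ^ (n - k) * n.choose k) • (mixedPartial hU k (n - k) w : ℝ × ℝ → F) x := by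
  rw [pow_partialDeriv_eq_sum]
  simp only [LinearMap.sum_apply, Finset.sum_apply, LinearMap.smul_apply, Submodule.coe_sum,
    Submodule.coe_smul, Pi.smul_apply]

lemma mixedPartial_mul_helmholtz (a b : ℕ) (lam : ℝ) :
    mixedPartial (F := F) hU a b
        * (partialDeriv hU (1, 0) ^ 2 + partialDeriv hU (0, 1) ^ 2 + lam • 1)
      = mixedPartial hU (a + 2) b + mixedPartial hU a (b + 2) + lam • mixedPartial hU a b := by
  have hcomm := ((commute_partialDeriv (F := F) hU (0, 1) (1, 0)).pow_pow b 2).eq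
  simp only [mixedPartial, mul_add, mul_smul_comm, mul_one, mul_assoc, hcomm, pow_add]

lemma mixedPartial_recursion {w : analyticOnNhdSubmodule ℂ U} {lam : ℝ}
    (hw : ∀ x ∈ U, pd1 (pd1 w) x + pd2 (pd2 w) x + (lam : ℂ) * (w : ℝ × ℝ → ℂ) x = 0)
    {x : ℝ × ℝ} (hx : x ∈ U) (a b : ℕ) :
    (mixedPartial hU (a + 2) b w : ℝ × ℝ → ℂ) x + (mixedPartial hU a (b + 2) w : ℝ × ℝ → ℂ) x
      + lam * (mixedPartial hU a b w : ℝ × ℝ → ℂ) x = 0 := by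
  set L := partialDeriv (F := ℂ) hU (1, 0) ^ 2 + partialDeriv hU (0, 1) ^ 2 + lam • 1
  have hpd : ∀ y ∈ U, ∀ v : ℝ × ℝ, fderiv ℝ (fun z => fderiv ℝ (w : ℝ × ℝ → ℂ) z v) y v
      = (partialDeriv hU v (partialDeriv hU v w) : ℝ × ℝ → ℂ) y := fun y hy v => by
    rw [partialDeriv_partialDeriv_apply hU hy,
      fderiv_fderiv_apply (w.2 y hy).fderiv.differentiableAt]
  have hL : EqOn (L w : ℝ × ℝ → ℂ) 0 U := fun y hy => by
    simp only [L, pow_two, Module.End.mul_apply, LinearMap.add_apply, LinearMap.smul_apply,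
      Module.End.one_apply, Submodule.coe_add, Submodule.coe_smul, Pi.add_apply, Pi.smul_apply,
      Complex.real_smul, Pi.zero_apply, ← hpd y hy]
    exact hw y hy
  have := eqOn_pow_partialDeriv_apply hU (eqOn_pow_partialDeriv_apply hU hL (0, 1) b) (1, 0) a hx
  rw [← Module.End.mul_apply, ← Module.End.mul_apply, ← mixedPartial,
    mixedPartial_mul_helmholtz] at this
  simpa only [LinearMap.add_apply, LinearMap.smul_apply, Submodule.coe_add, Submodule.coe_smul,
    Pi.add_apply, Pi.smul_apply, Complex.real_smul, Pi.zero_apply] using this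

end Plane

section Recursion

open Finset

lemma eq_mul_I_pow_add_neg_I_pow_of_recursion {c : ℕ → ℕ → ℂ} {lam : ℂ} {N : ℕ}
    (hrec : ∀ a b, c (a + 2) b + c a (b + 2) + lam * c a b = 0) (hsing : ∀ n, c n 1 = 0)
    (hlow : ∀ a b, a + b < N → c a b = 0) :
    ∀ b a, a + b = N → c a b = c N 0 * ((I ^ b + (-I) ^ b) / 2) := by
  intro b
  induction b using Nat.strong_induction_on with
  | _ b ih =>
    intro a hab
    match b, ih with
    | 0, _ => simp [← hab]
    | 1, _ => simp [hsing]
    | b + 2, ih =>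
      have hstep : c a (b + 2) = - c (a + 2) b := by
        linear_combination hrec a b - lam * hlow a b (by omega)
      rw [hstep, ih b (by omega) (a + 2) (by omega)]
      simp only [pow_add, neg_sq, I_sq]
      ring

lemma eq_zero_of_recursion {c : ℕ → ℕ → ℂ} {lam x y : ℂ}
    (hxy : ∀ N : ℕ, (x + I * y) ^ N + (x - I * y) ^ N ≠ 0)
    (hrec : ∀ a b, c (a + 2) b + c a (b + 2) + lam * c a b = 0) (hsing : ∀ n, c n 1 = 0)
    (hnod : ∀ N, ∑ k ∈ range (N + 1), x ^ k * y ^ (N - k) * N.choose k * c k (N - k) = 0)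
    (a b : ℕ) : c a b = 0 := by
  suffices h : ∀ N a b, a + b = N → c a b = 0 from h _ a b rfl
  intro N
  induction N using Nat.strong_induction_on with
  | _ N ih =>
    have hlevel := eq_mul_I_pow_add_neg_I_pow_of_recursion hrec hsing fun a b hab => ih _ hab a b rfl
    have hsum : ∑ k ∈ range (N + 1), x ^ k * y ^ (N - k) * N.choose k * c k (N - k)
        = c N 0 / 2 * ((x + I * y) ^ N + (x - I * y) ^ N) := by
      rw [sub_eq_add_neg, ← neg_mul, add_pow, add_pow, ← sum_add_distrib, mul_sum]
      refine sum_congr rfl fun k hk => ?_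
      rw [hlevel (N - k) k (by have := mem_range.mp hk; omega)]
      ring
    have hN : c N 0 = 0 := by simpa [hsum, hxy N] using hnod N
    intro a b hab
    rw [hlevel b a hab, hN, zero_mul]

lemma cos_add_I_mul_sin_pow_add (θ : ℝ) (N : ℕ) :
    ((Real.cos θ : ℂ) + I * Real.sin θ) ^ N + ((Real.cos θ : ℂ) - I * Real.sin θ) ^ N
      = 2 * Real.cos (N * θ) := by
  have h₁ := cos_add_sin_mul_I_pow N θ
  have h₂ := cos_add_sin_mul_I_pow N (-θ)
  simp only [Complex.cos_neg, Complex.sin_neg, mul_neg] at h₂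
  push_cast
  linear_combination h₁ + h₂

lemma Irrational.cos_natCast_mul_mul_pi_ne_zero {α : ℝ} (hα : Irrational α) (N : ℕ) :
    Real.cos (N * (α * Real.pi)) ≠ 0 := by
  rcases Nat.eq_zero_or_pos N with rfl | hN
  · simp
  intro hcos
  obtain ⟨k, hk⟩ := Real.cos_eq_zero_iff.mp hcos
  refine hα.natCast_mul hN.ne' ⟨(2 * k + 1) / 2, ?_⟩
  push_cast
  exact mul_right_cancel₀ Real.pi_ne_zero (by linear_combination -hk)

end Recursion

end HelmholtzVanishingOrder

open HelmholtzVanishingOrder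

theorem stmt12_general
    (Ω : Set (ℝ × ℝ)) (hΩ : IsOpen Ω)
    (lam : ℝ)
    (u : ℝ × ℝ → ℂ)
    (hu_an : AnalyticOnNhd ℝ u Ω)
    (hu_eq : ∀ x ∈ Ω, pd1 (pd1 u) x + pd2 (pd2 u) x + (lam : ℂ) * u x = 0)
    (α : ℝ) (hirr : Irrational α)
    (θ₀ : ℝ) (hθ₀ : θ₀ = α * Real.pi)
    (h : ℝ) (hh : 0 < h)
    (hdisk : ∀ x : ℝ × ℝ, x.1 ^ 2 + x.2 ^ 2 ≤ h ^ 2 → x ∈ Ω)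
    (hsing_m : ∀ r : ℝ, 0 ≤ r → r ≤ h → fderiv ℝ u (r, 0) (0, -1) = 0)
    (hnodal_p : ∀ r : ℝ, 0 ≤ r → r ≤ h → u (r * Real.cos θ₀, r * Real.sin θ₀) = 0) :
    ∀ k : ℕ, iteratedFDeriv ℝ k u (0, 0) = 0 := by
  have h0 : (0 : ℝ × ℝ) ∈ Ω := hdisk 0 (by simp [sq_nonneg])
  have hray {P : ℝ → Prop} (hP : ∀ r, 0 ≤ r → r ≤ h → P r) : ∀ᶠ t in 𝓝[>] (0 : ℝ), P t :=
    eventually_of_mem (Ioo_mem_nhdsGT hh) fun t ht => hP t ht.1.le ht.2.le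
  let w : analyticOnNhdSubmodule ℂ Ω := ⟨u, hu_an⟩
  have hc : ∀ a b, (mixedPartial hΩ a b w : ℝ × ℝ → ℂ) 0 = 0 :=
    eq_zero_of_recursion (x := Real.cos θ₀) (y := Real.sin θ₀) ?cos
      (mixedPartial_recursion hΩ hu_eq h0) ?singular ?nodal
  case cos =>
    intro N
    rw [cos_add_I_mul_sin_pow_add, hθ₀]
    exact mul_ne_zero two_ne_zero (ofReal_ne_zero.mpr (hirr.cos_natCast_mul_mul_pi_ne_zero N))
  case singular =>
    intro n
    have hsing : ∀ r : ℝ, 0 ≤ r → r ≤ h → fderiv ℝ u (r • ((1 : ℝ), (0 : ℝ))) (0, 1) = 0 :=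
      fun r h0r hrh => by simpa [← map_neg] using congrArg Neg.neg (hsing_m r h0r hrh)
    simpa [mixedPartial] using
      pow_partialDeriv_partialDeriv_apply_zero_of_ray hΩ h0 (w := w) (hray hsing) n
  case nodal =>
    intro N
    have hnodal : ∀ r : ℝ, 0 ≤ r → r ≤ h → u (r • (Real.cos θ₀, Real.sin θ₀)) = 0 :=
      fun r h0r hrh => by simpa using hnodal_p r h0r hrh
    have := pow_partialDeriv_apply_zero_of_ray hΩ h0 (w := w) (hray hnodal) N
    simpa [pow_partialDeriv_apply_eq_sum, Complex.real_smul] using this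
  intro k
  rw [Prod.mk_zero_zero]
  refine iteratedFDeriv_eq_zero_of_apply_diag_eq_zero (hu_an 0 h0) (fun n y => ?_) k
  rw [iteratedFDeriv_apply_diag_eq_pow_partialDeriv hΩ h0 y n w, pow_partialDeriv_apply_eq_sum]
  simp [hc]

/-- A singular line `Γ_h^−` and a nodal line `Γ_h^+` intersecting at the origin at an
irrational angle `θ₀ = απ`, `α ∈ (0,2)` irrational: `u` has infinite vanishing order
at `0`. -/
theorem stmt12
    (Ω : Set (ℝ × ℝ)) (hΩ : IsOpen Ω)
    (lam : ℝ) (hlam : 0 < lam)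
    (u : ℝ × ℝ → ℂ)
    (hu_an : AnalyticOnNhd ℝ u Ω)
    (hu_eq : ∀ x ∈ Ω, pd1 (pd1 u) x + pd2 (pd2 u) x + (lam : ℂ) * u x = 0)
    (α : ℝ) (hα : α ∈ Set.Ioo (0 : ℝ) 2) (hirr : Irrational α)
    (θ₀ : ℝ) (hθ₀ : θ₀ = α * Real.pi)
    (h : ℝ) (hh : 0 < h)
    (hdisk : ∀ x : ℝ × ℝ, x.1 ^ 2 + x.2 ^ 2 ≤ h ^ 2 → x ∈ Ω)
    (hsing_m : ∀ r : ℝ, 0 ≤ r → r ≤ h → fderiv ℝ u (r, 0) (0, -1) = 0)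
    (hnodal_p : ∀ r : ℝ, 0 ≤ r → r ≤ h → u (r * Real.cos θ₀, r * Real.sin θ₀) = 0) :
    ∀ k : ℕ, iteratedFDeriv ℝ k u (0, 0) = 0 :=
  stmt12_general Ω hΩ lam u hu_an hu_eq α hirr θ₀ hθ₀ h hh hdisk hsing_m hnodal_p
end

section
/- Let Ω, λ, u, α, θ₀, h, Γ_h^−, Γ_h^+, ν⁻, ν⁺ be as in the context. Let η₁ : Γ_h^− → ℂ and η₂ : Γ_h^+ → ℂ be continuously differentiable (C¹) functions, and suppose ∇u(x)·ν⁻ + η₁(x)·u(x) = 0 for all x ∈ Γ_h^− and ∇u(x)·ν⁺ + η₂(x)·u(x) = 0 for all x ∈ Γ_h^+. If u(0) = 0 and α ≠ 1/2, then u vanishes at 0 up to order 3, i.e., u(0) = 0, ∇u(0) = 0, and all second-order partial derivatives of u vanish at 0. -/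
/-!
Evaluating the Robin conditions `∂_ν u + η u = 0` at the corner, where `u` vanishes, gives
`∇u(0) · ν = 0` for both normals, which are independent, so `∇u(0) = 0`. Differentiating them
along each ray at the corner then kills the `η u` term (`η` is merely continuous and
`u ∘ γ = o(r)`), so the Hessian `D` of `u` at `0` satisfies `D(τ, ν) = 0` for the tangent `τ` and
normal `ν` of each ray. Being symmetric and traceless (the equation at `0`), `D` has the form
`[[a, b], [b, -a]]`; the first ray gives `b = 0` and the second `sin (2θ₀) a = 0`, and
`sin (2θ₀) ≠ 0` because the opening angle is not `π/2`.
-/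

open Real Set
open scoped ContDiff

theorem Real.sin_two_mul_mul_pi_ne_zero {α : ℝ} (hα : α ∈ Ioo 0 1) (hα2 : α ≠ 1 / 2) :
    sin (2 * (α * π)) ≠ 0 := by
  have hπ := pi_pos
  rw [← neg_neg (sin _), ← sin_sub_pi, neg_ne_zero, Ne,
    sin_eq_zero_iff_of_lt_of_lt (by nlinarith [hα.1]) (by nlinarith [hα.2])]
  intro h
  apply hα2
  nlinarith

theorem ContinuousLinearMap.prod_ext_ring {R M : Type*} [Semiring R] [TopologicalSpace R]
    [AddCommMonoid M] [TopologicalSpace M] [Module R M] {f g : R × R →L[R] M}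
    (h₁ : f (1, 0) = g (1, 0)) (h₂ : f (0, 1) = g (0, 1)) : f = g :=
  prod_ext (ext_ring h₁) (ext_ring h₂)

theorem Prod.mk_eq_smul_add_smul (a b : ℝ) :
    (a, b) = a • ((1 : ℝ), (0 : ℝ)) + b • ((0 : ℝ), (1 : ℝ)) := by
  ext <;> simp

theorem ContinuousLinearMap.eq_zero_of_apply_normals {F : Type*} [AddCommGroup F] [Module ℝ F]
    [TopologicalSpace F] {L : ℝ × ℝ →L[ℝ] F} {θ : ℝ}
    (hθ : sin θ ≠ 0) (h₁ : L (0, -1) = 0) (h₂ : L (-sin θ, cos θ) = 0) : L = 0 := by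
  have he₂ : L (0, 1) = 0 := by
    rw [show ((0 : ℝ), (1 : ℝ)) = -(0, -1) by simp, map_neg, h₁, neg_zero]
  have he₁ : L (1, 0) = 0 := by
    rw [Prod.mk_eq_smul_add_smul, map_add, map_smul, map_smul, he₂, smul_zero, add_zero,
      smul_eq_zero, neg_eq_zero] at h₂
    exact h₂.resolve_left hθ
  exact prod_ext_ring he₁ he₂

theorem ContinuousLinearMap.eq_zero_of_trace_eq_zero_of_apply_normals
    {F : Type*} [NormedAddCommGroup F] [NormedSpace ℝ F] {D : ℝ × ℝ →L[ℝ] ℝ × ℝ →L[ℝ] F}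
    {θ : ℝ} (hθ : sin (2 * θ) ≠ 0)
    (hsymm : ∀ v w, D v w = D w v) (htr : D (1, 0) (1, 0) + D (0, 1) (0, 1) = 0)
    (h₁ : D (1, 0) (0, -1) = 0) (h₂ : D (cos θ, sin θ) (-sin θ, cos θ) = 0) : D = 0 := by
  have h₁₂ : D (1, 0) (0, 1) = 0 := by
    rw [show ((0 : ℝ), (1 : ℝ)) = -(0, -1) by simp, map_neg, h₁, neg_zero]
  have h₂₁ : D (0, 1) (1, 0) = 0 := hsymm (0, 1) (1, 0) ▸ h₁₂
  have h₁₁ : D (1, 0) (1, 0) = 0 := by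
    rw [Prod.mk_eq_smul_add_smul (cos θ), Prod.mk_eq_smul_add_smul (-sin θ)] at h₂
    simp only [map_add, map_smul, add_apply, smul_apply, h₁₂, h₂₁, smul_zero, add_zero,
      zero_add] at h₂
    have : sin (2 * θ) • D (1, 0) (1, 0) = 0 := by
      rw [sin_two_mul]
      linear_combination (norm := module) -h₂ + (sin θ * cos θ) • htr
    exact (smul_eq_zero.mp this).resolve_left hθ
  have h₂₂ : D (0, 1) (0, 1) = 0 := by simpa [h₁₁] using htr
  exact prod_ext_ring (prod_ext_ring h₁₁ h₁₂) (prod_ext_ring h₂₁ h₂₂)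

theorem HasDerivWithinAt.mul_left_of_continuousWithinAt {𝔸 : Type*} [NormedRing 𝔸]
    [NormedSpace ℝ 𝔸] {s : Set ℝ} {t : ℝ} {φ g : ℝ → 𝔸}
    (hg : HasDerivWithinAt g 0 s t) (hgt : g t = 0) (hφ : ContinuousWithinAt φ s t) :
    HasDerivWithinAt (fun r => φ r * g r) 0 s t := by
  rw [hasDerivWithinAt_iff_isLittleO] at hg ⊢
  simp only [hgt, mul_zero, sub_zero, smul_zero] at hg ⊢
  simpa using (hφ.isBigO_one ℝ).mul_isLittleO hg

section SecondDerivative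

variable {E F : Type*} [NormedAddCommGroup E] [NormedSpace ℝ E] [NormedAddCommGroup F]
  [NormedSpace ℝ F]

theorem HasFDerivAt.fderiv_apply {u : E → F} {D : E →L[ℝ] E →L[ℝ] F} {x : E}
    (hD : HasFDerivAt (fderiv ℝ u) D x) (v : E) :
    HasFDerivAt (fun y => fderiv ℝ u y v) ((ContinuousLinearMap.apply ℝ F v).comp D) x :=
  (ContinuousLinearMap.apply ℝ F v).hasFDerivAt.comp x hD

theorem fderiv_fderiv_apply_eq_zero_of_robin_along_curve {𝔸 : Type*} [NormedRing 𝔸]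
    [NormedSpace ℝ 𝔸] {u η : E → 𝔸} {x₀ τ ν : E} {D : E →L[ℝ] E →L[ℝ] 𝔸} {γ : ℝ → E}
    {s : Set ℝ} {S : Set E} {t : ℝ}
    (hu : HasFDerivAt u (0 : E →L[ℝ] 𝔸) x₀) (hu₀ : u x₀ = 0)
    (hD : HasFDerivAt (fderiv ℝ u) D x₀) (hγ : HasDerivAt γ τ t) (hγt : γ t = x₀)
    (hη : ContinuousWithinAt η S x₀) (hγS : MapsTo γ s S) (hs : UniqueDiffWithinAt ℝ s t)
    (ht : t ∈ s) (hbc : ∀ r ∈ s, fderiv ℝ u (γ r) ν + η (γ r) * u (γ r) = 0) :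
    D τ ν = 0 := by
  subst hγt
  have hnormal : HasDerivAt (fun r => fderiv ℝ u (γ r) ν) (D τ ν) t :=
    (hD.fderiv_apply ν).comp_hasDerivAt t hγ
  have hval : HasDerivAt (fun r => u (γ r)) 0 t := by
    simpa [Function.comp_def] using hu.comp_hasDerivAt t hγ
  have hrobin : HasDerivWithinAt (fun r => η (γ r) * u (γ r)) 0 s t :=
    hval.hasDerivWithinAt.mul_left_of_continuousWithinAt hu₀
      (hη.comp hγ.continuousAt.continuousWithinAt hγS)
  have hconst : HasDerivWithinAt (fun r => fderiv ℝ u (γ r) ν + η (γ r) * u (γ r)) 0 s t :=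
    (hasDerivWithinAt_const t s 0).congr hbc (hbc t ht)
  simpa using hs.eq_deriv _ (hnormal.hasDerivWithinAt.add hrobin) hconst

theorem fderiv_fderiv_apply_eq_zero_of_robin_on_Icc {𝔸 : Type*} [NormedRing 𝔸]
    [NormedSpace ℝ 𝔸] {u η : E → 𝔸} {x₀ τ ν : E} {D : E →L[ℝ] E →L[ℝ] 𝔸} {γ : ℝ → E} {h : ℝ}
    (hh : 0 < h) (hu : HasFDerivAt u (0 : E →L[ℝ] 𝔸) x₀) (hu₀ : u x₀ = 0)
    (hD : HasFDerivAt (fderiv ℝ u) D x₀) (hγ : HasDerivAt γ τ 0) (hγ₀ : γ 0 = x₀)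
    (hη : ContinuousOn η {p | ∃ r : ℝ, 0 ≤ r ∧ r ≤ h ∧ p = γ r})
    (hbc : ∀ r : ℝ, 0 ≤ r → r ≤ h → fderiv ℝ u (γ r) ν + η (γ r) * u (γ r) = 0) :
    D τ ν = 0 :=
  fderiv_fderiv_apply_eq_zero_of_robin_along_curve hu hu₀ hD hγ hγ₀
    (hη _ ⟨0, le_rfl, hh.le, hγ₀.symm⟩) (fun r hr => ⟨r, hr.1, hr.2, rfl⟩)
    (uniqueDiffOn_Icc hh 0 ⟨le_rfl, hh.le⟩) ⟨le_rfl, hh.le⟩ (fun r hr => hbc r hr.1 hr.2)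

theorem iteratedFDeriv_eq_zero_of_lt_three {u : E → F} {x : E} (h₀ : u x = 0)
    (h₁ : fderiv ℝ u x = 0) (h₂ : fderiv ℝ (fderiv ℝ u) x = 0) :
    ∀ k < 3, iteratedFDeriv ℝ k u x = 0 := by
  intro k hk
  interval_cases k <;> ext m
  · simp [h₀]
  · simp [iteratedFDeriv_one_apply, h₁]
  · simp [iteratedFDeriv_two_apply, h₂]

end SecondDerivative

theorem pd1_pd1_add_pd2_pd2_eq {u : ℝ × ℝ → ℂ} {D : ℝ × ℝ →L[ℝ] ℝ × ℝ →L[ℝ] ℂ} {x : ℝ × ℝ}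
    (hD : HasFDerivAt (fderiv ℝ u) D x) :
    pd1 (pd1 u) x + pd2 (pd2 u) x = D (1, 0) (1, 0) + D (0, 1) (0, 1) := by
  unfold pd1 pd2
  rw [(hD.fderiv_apply _).fderiv, (hD.fderiv_apply _).fderiv]
  rfl

theorem stmt13_general
    (Ω : Set (ℝ × ℝ))
    (lam : ℝ)
    (u : ℝ × ℝ → ℂ)
    (hu_an : AnalyticOnNhd ℝ u Ω)
    (hu_eq : ∀ x ∈ Ω, pd1 (pd1 u) x + pd2 (pd2 u) x + (lam : ℂ) * u x = 0)
    (α : ℝ) (hα : α ∈ Set.Ioo (0 : ℝ) 1)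
    (θ₀ : ℝ) (hθ₀ : θ₀ = α * Real.pi)
    (h : ℝ) (hh : 0 < h)
    (hdisk : ∀ x : ℝ × ℝ, x.1 ^ 2 + x.2 ^ 2 ≤ h ^ 2 → x ∈ Ω)
    (η₁ η₂ : ℝ × ℝ → ℂ)
    (hη₁ : ContDiffOn ℝ 1 η₁ {p : ℝ × ℝ | ∃ r : ℝ, 0 ≤ r ∧ r ≤ h ∧ p = (r, 0)})
    (hη₂ : ContDiffOn ℝ 1 η₂
      {p : ℝ × ℝ | ∃ r : ℝ, 0 ≤ r ∧ r ≤ h ∧ p = (r * Real.cos θ₀, r * Real.sin θ₀)})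
    (hbc₁ : ∀ r : ℝ, 0 ≤ r → r ≤ h →
      fderiv ℝ u (r, 0) (0, -1) + η₁ (r, 0) * u (r, 0) = 0)
    (hbc₂ : ∀ r : ℝ, 0 ≤ r → r ≤ h →
      fderiv ℝ u (r * Real.cos θ₀, r * Real.sin θ₀) (-Real.sin θ₀, Real.cos θ₀)
        + η₂ (r * Real.cos θ₀, r * Real.sin θ₀) * u (r * Real.cos θ₀, r * Real.sin θ₀) = 0)
    (hu0 : u (0, 0) = 0)
    (hα2 : α ≠ 1 / 2) :
    ∀ k : ℕ, k < 3 → iteratedFDeriv ℝ k u (0, 0) = 0 := by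
  have hθ : sin (2 * θ₀) ≠ 0 := hθ₀ ▸ sin_two_mul_mul_pi_ne_zero hα hα2
  have h0Ω : ((0 : ℝ), (0 : ℝ)) ∈ Ω := hdisk 0 (by simp [sq_nonneg])
  have hu_smooth : ContDiffAt ℝ ω u (0, 0) := (hu_an _ h0Ω).contDiffAt
  set D := fderiv ℝ (fderiv ℝ u) (0, 0)
  have hD : HasFDerivAt (fderiv ℝ u) D (0, 0) :=
    ((hu_smooth.fderiv_right (m := 1) le_top).differentiableAt one_ne_zero).hasFDerivAt
  have hDu : fderiv ℝ u (0, 0) = 0 :=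
    ContinuousLinearMap.eq_zero_of_apply_normals (θ := θ₀)
      (fun hs => hθ (by rw [sin_two_mul, hs]; ring))
      (by simpa [hu0] using hbc₁ 0 le_rfl hh.le) (by simpa [hu0] using hbc₂ 0 le_rfl hh.le)
  have hu : HasFDerivAt u (0 : ℝ × ℝ →L[ℝ] ℂ) (0, 0) :=
    hDu ▸ (hu_smooth.differentiableAt (by simp)).hasFDerivAt
  have h₁ : D (1, 0) (0, -1) = 0 :=
    fderiv_fderiv_apply_eq_zero_of_robin_on_Icc hh hu hu0 hD
      ((hasDerivAt_id' 0).prodMk (hasDerivAt_const 0 0)) rfl hη₁.continuousOn hbc₁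
  have hγ₂ : HasDerivAt (fun r : ℝ => (r * cos θ₀, r * sin θ₀)) (cos θ₀, sin θ₀) 0 := by
    simpa using ((hasDerivAt_id' 0).mul_const (cos θ₀)).prodMk
      ((hasDerivAt_id' 0).mul_const (sin θ₀))
  have h₂ : D (cos θ₀, sin θ₀) (-sin θ₀, cos θ₀) = 0 :=
    fderiv_fderiv_apply_eq_zero_of_robin_on_Icc hh hu hu0 hD hγ₂ (by simp) hη₂.continuousOn hbc₂
  have htr : D (1, 0) (1, 0) + D (0, 1) (0, 1) = 0 := by
    simpa [pd1_pd1_add_pd2_pd2_eq hD, hu0] using hu_eq (0, 0) h0Ω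
  exact iteratedFDeriv_eq_zero_of_lt_three hu0 hDu
    (ContinuousLinearMap.eq_zero_of_trace_eq_zero_of_apply_normals hθ
      hu_smooth.isSymmSndFDerivAt_of_omega htr h₁ h₂)

/-- Two generalized singular lines with `C¹` parameters `η₁, η₂` intersecting at the origin
at angle `θ₀ = απ`, with `u 0 = 0` and `α ≠ 1/2`: the eigenfunction vanishes at `0` up to
order `3` (i.e. all partial derivatives of order `< 3` vanish at `0`). -/
theorem stmt13
    (Ω : Set (ℝ × ℝ)) (hΩ : IsOpen Ω)
    (lam : ℝ) (hlam : 0 < lam)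
    (u : ℝ × ℝ → ℂ)
    (hu_an : AnalyticOnNhd ℝ u Ω)
    (hu_eq : ∀ x ∈ Ω, pd1 (pd1 u) x + pd2 (pd2 u) x + (lam : ℂ) * u x = 0)
    (α : ℝ) (hα : α ∈ Set.Ioo (0 : ℝ) 1)
    (θ₀ : ℝ) (hθ₀ : θ₀ = α * Real.pi)
    (h : ℝ) (hh : 0 < h)
    (hdisk : ∀ x : ℝ × ℝ, x.1 ^ 2 + x.2 ^ 2 ≤ h ^ 2 → x ∈ Ω)
    (η₁ η₂ : ℝ × ℝ → ℂ)
    (hη₁ : ContDiffOn ℝ 1 η₁ {p : ℝ × ℝ | ∃ r : ℝ, 0 ≤ r ∧ r ≤ h ∧ p = (r, 0)})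
    (hη₂ : ContDiffOn ℝ 1 η₂
      {p : ℝ × ℝ | ∃ r : ℝ, 0 ≤ r ∧ r ≤ h ∧ p = (r * Real.cos θ₀, r * Real.sin θ₀)})
    (hbc₁ : ∀ r : ℝ, 0 ≤ r → r ≤ h →
      fderiv ℝ u (r, 0) (0, -1) + η₁ (r, 0) * u (r, 0) = 0)
    (hbc₂ : ∀ r : ℝ, 0 ≤ r → r ≤ h →
      fderiv ℝ u (r * Real.cos θ₀, r * Real.sin θ₀) (-Real.sin θ₀, Real.cos θ₀)
        + η₂ (r * Real.cos θ₀, r * Real.sin θ₀) * u (r * Real.cos θ₀, r * Real.sin θ₀) = 0)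
    (hu0 : u (0, 0) = 0)
    (hα2 : α ≠ 1 / 2) :
    ∀ k : ℕ, k < 3 → iteratedFDeriv ℝ k u (0, 0) = 0 :=
  stmt13_general Ω lam u hu_an hu_eq α hα θ₀ hθ₀ h hh hdisk η₁ η₂ hη₁ hη₂ hbc₁ hbc₂ hu0 hα2
end

section
/- Let ζ ∈ ℂ with ζ ≠ 0, let s > 0, h > 0 be real numbers, and let ℓ ≥ 0 be an integer. Then: (i) ∫₀^h r^ℓ · exp(√(sr)·ζ) dr = (2/s^{ℓ+1}) · [ (2ℓ+1)!/ζ^{2ℓ+2} + exp(√(sh)·ζ) · ∑_{j=0}^{2ℓ+1} (−1)^j · (2ℓ+1)! / ((2ℓ+1−j)! · ζ^{j+1}) · (sh)^{(2ℓ+1−j)/2} ]; and (ii) ∫₀^h r^{ℓ−1/2} · s^{1/2} · exp(√(sr)·ζ) dr = (2/s^{ℓ}) · [ −(2ℓ)!/ζ^{2ℓ+1} + exp(√(sh)·ζ) · ∑_{j=0}^{2ℓ} (−1)^j · (2ℓ)! / ((2ℓ−j)! · ζ^{j+1}) · (sh)^{(2ℓ−j)/2} ]. -/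
/-!
The substitution `u = √(s r)`, with `du = s / (2 √(s r)) dr`, turns the two integrals into
`(2 / s^(ℓ+1)) ∫₀^√(sh) u^(2ℓ+1) e^(uζ) du` and `(2 / s^ℓ) ∫₀^√(sh) u^(2ℓ) e^(uζ) du`, and repeated
integration by parts evaluates `∫ uⁿ e^(uζ) du`. The substitution is made with the change of
variables formula for injective differentiable maps, which holds without any integrability
assumption, so the singularity of the second integrand at `r = 0` needs no separate estimate.
-/

open scoped Nat
open Set MeasureTheory

/-- Integration by parts: `∫ uⁿ⁺¹ e^(uζ) = uⁿ⁺¹ e^(uζ) / ζ - (n + 1) / ζ ∫ uⁿ e^(uζ)`. -/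
noncomputable def powExpAntideriv (ζ : ℂ) : ℕ → ℂ → ℂ
  | 0, u => Complex.exp (u * ζ) / ζ
  | n + 1, u => u ^ (n + 1) * Complex.exp (u * ζ) / ζ - (n + 1) / ζ * powExpAntideriv ζ n u

theorem hasDerivAt_powExpAntideriv {ζ : ℂ} (hζ : ζ ≠ 0) (n : ℕ) (u : ℂ) :
    HasDerivAt (powExpAntideriv ζ n) (u ^ n * Complex.exp (u * ζ)) u := by
  have hexp (u : ℂ) : HasDerivAt (fun u => Complex.exp (u * ζ)) (Complex.exp (u * ζ) * ζ) u := by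
    simpa using ((hasDerivAt_id u).mul_const ζ).cexp
  induction n generalizing u with
  | zero =>
    exact ((hexp u).div_const ζ).congr_deriv (by field_simp)
  | succ n ih =>
    refine ((((hasDerivAt_pow (n + 1) u).mul (hexp u)).div_const ζ).sub
      ((ih u).const_mul ((n + 1) / ζ))).congr_deriv ?_
    push_cast
    field_simp
    ring

theorem powExpAntideriv_eq_sum (ζ : ℂ) (n : ℕ) (u : ℂ) :
    powExpAntideriv ζ n u = Complex.exp (u * ζ) *
      ∑ j ∈ Finset.range (n + 1), (-1) ^ j * n ! / ((n - j)! * ζ ^ (j + 1)) * u ^ (n - j) := by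
  induction n with
  | zero => simp [powExpAntideriv, div_eq_mul_inv]
  | succ n ih =>
    have hterm (j : ℕ) :
        (-1) ^ (j + 1) * ((n + 1)! : ℂ) / ((n + 1 - (j + 1))! * ζ ^ (j + 1 + 1)) *
          u ^ (n + 1 - (j + 1)) =
        -((n + 1) / ζ) * ((-1) ^ j * n ! / ((n - j)! * ζ ^ (j + 1)) * u ^ (n - j)) := by
      rw [Nat.add_sub_add_right, Nat.factorial_succ]
      push_cast
      ring
    have hfirst : (-1) ^ 0 * ((n + 1)! : ℂ) / ((n + 1 - 0)! * ζ ^ (0 + 1)) * u ^ (n + 1 - 0) =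
        u ^ (n + 1) / ζ := by
      have : ((n + 1)! : ℂ) ≠ 0 := mod_cast (n + 1).factorial_ne_zero
      simp only [pow_zero, one_mul, Nat.sub_zero, zero_add, pow_one]
      field_simp
    rw [Finset.sum_range_succ', powExpAntideriv, ih, hfirst]
    simp only [hterm, ← Finset.mul_sum]
    ring

theorem powExpAntideriv_apply_zero (ζ : ℂ) (n : ℕ) :
    powExpAntideriv ζ n 0 = (-1) ^ n * n ! / ζ ^ (n + 1) := by
  induction n with
  | zero => simp [powExpAntideriv]
  | succ n ih =>
    rw [powExpAntideriv, ih, Nat.factorial_succ]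
    push_cast
    ring

theorem integral_ofReal_pow_mul_exp {ζ : ℂ} (hζ : ζ ≠ 0) (n : ℕ) (a : ℝ) :
    ∫ u in 0..a, (u : ℂ) ^ n * Complex.exp (u * ζ) =
      powExpAntideriv ζ n a - powExpAntideriv ζ n 0 := by
  rw [intervalIntegral.integral_eq_sub_of_hasDerivAt
    (fun u _ => (hasDerivAt_powExpAntideriv hζ n u).comp_ofReal)
    (Continuous.intervalIntegrable (by fun_prop) _ _)]
  simp

theorem image_sqrt_mul_Ioc {s : ℝ} (hs : 0 < s) (h : ℝ) :
    (fun r => √(s * r)) '' Ioc 0 h = Ioc 0 √(s * h) := by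
  ext u
  constructor
  · rintro ⟨r, ⟨hr, hrh⟩, rfl⟩
    exact ⟨Real.sqrt_pos.2 (mul_pos hs hr),
      Real.sqrt_le_sqrt (mul_le_mul_of_nonneg_left hrh hs.le)⟩
  · rintro ⟨hu, hus⟩
    refine ⟨u ^ 2 / s, ⟨by positivity, ?_⟩, ?_⟩
    · rw [div_le_iff₀' hs]
      exact (Real.le_sqrt' hu).1 hus
    · simp only [mul_div_cancel₀ _ hs.ne', Real.sqrt_sq hu.le]

theorem hasDerivAt_sqrt_mul {s r : ℝ} (hs : 0 < s) (hr : 0 < r) :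
    HasDerivAt (fun r => √(s * r)) (s / (2 * √(s * r))) r := by
  have := ((hasDerivAt_id r).const_mul s).sqrt (mul_pos hs hr).ne'
  simpa [mul_comm] using this

theorem integral_comp_sqrt_mul {E : Type*} [NormedAddCommGroup E] [NormedSpace ℝ E]
    {s h : ℝ} (hs : 0 < s) (hh : 0 ≤ h) (g : ℝ → E) :
    ∫ r in 0..h, (s / (2 * √(s * r))) • g √(s * r) = ∫ u in 0..√(s * h), g u := by
  rw [intervalIntegral.integral_of_le hh, intervalIntegral.integral_of_le (Real.sqrt_nonneg _),
    ← image_sqrt_mul_Ioc hs, integral_image_eq_integral_abs_deriv_smul measurableSet_Ioc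
      (fun r hr => (hasDerivAt_sqrt_mul hs hr.1).hasDerivWithinAt)]
  · refine setIntegral_congr_fun measurableSet_Ioc fun r hr => ?_
    rw [abs_of_pos (by have := Real.sqrt_pos.2 (mul_pos hs hr.1); positivity)]
  · exact (StrictMonoOn.injOn fun a ha b _ hab =>
      Real.sqrt_lt_sqrt (mul_pos hs ha.1).le (mul_lt_mul_of_pos_left hab hs))

theorem integral_sqrt_mul_pow_mul_exp {ζ : ℂ} (hζ : ζ ≠ 0) {s h : ℝ} (hs : 0 < s) (hh : 0 ≤ h)
    (n : ℕ) :
    ∫ r in 0..h, ((s / (2 * √(s * r)) : ℝ) : ℂ) *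
        ((√(s * r) : ℂ) ^ n * Complex.exp (√(s * r) * ζ)) =
      Complex.exp (√(s * h) * ζ) * ∑ j ∈ Finset.range (n + 1),
          (-1) ^ j * n ! / ((n - j)! * ζ ^ (j + 1)) * (√(s * h) : ℂ) ^ (n - j)
        - (-1) ^ n * n ! / ζ ^ (n + 1) := by
  have hsub := integral_comp_sqrt_mul hs hh fun u => (u : ℂ) ^ n * Complex.exp (u * ζ)
  simp only [Complex.real_smul] at hsub
  rw [hsub, integral_ofReal_pow_mul_exp hζ, powExpAntideriv_eq_sum,
    powExpAntideriv_apply_zero]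

theorem pow_eq_sqrt_mul_pow_two_mul_add_one {s r : ℝ} (hs : 0 < s) (hr : 0 < r) (ℓ : ℕ) :
    r ^ ℓ = 2 / s ^ (ℓ + 1) * (s / (2 * √(s * r)) * √(s * r) ^ (2 * ℓ + 1)) := by
  have hsr : 0 < √(s * r) := Real.sqrt_pos.2 (mul_pos hs hr)
  rw [pow_succ _ (2 * ℓ), pow_mul, Real.sq_sqrt (mul_pos hs hr).le]
  field_simp
  ring

theorem sqrt_mul_pow_div_sqrt_eq_sqrt_mul_pow_two_mul {s r : ℝ} (hs : 0 < s) (hr : 0 < r)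
    (ℓ : ℕ) :
    √s * r ^ ℓ / √r = 2 / s ^ ℓ * (s / (2 * √(s * r)) * √(s * r) ^ (2 * ℓ)) := by
  have hs' : 0 < √s := Real.sqrt_pos.2 hs
  have hr' : 0 < √r := Real.sqrt_pos.2 hr
  rw [pow_mul, Real.sq_sqrt (mul_pos hs hr).le, Real.sqrt_mul hs.le]
  field_simp
  rw [Real.sq_sqrt hs.le]
  ring

theorem integral_ofReal_pow_mul_exp_sqrt_mul {ζ : ℂ} (hζ : ζ ≠ 0) {s h : ℝ} (hs : 0 < s)
    (hh : 0 ≤ h) (ℓ : ℕ) :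
    ∫ r in (0:ℝ)..h, (r : ℂ) ^ ℓ * Complex.exp ((√(s * r) : ℂ) * ζ)
      = 2 / (s : ℂ) ^ (ℓ + 1) *
        ((2 * ℓ + 1)! / ζ ^ (2 * ℓ + 2) +
          Complex.exp (√(s * h) * ζ) *
            ∑ j ∈ Finset.range (2 * ℓ + 2),
              (-1) ^ j * (2 * ℓ + 1)! / ((2 * ℓ + 1 - j)! * ζ ^ (j + 1)) *
                (√(s * h) : ℂ) ^ (2 * ℓ + 1 - j)) := by
  calc _ = ∫ r in (0:ℝ)..h, 2 / (s : ℂ) ^ (ℓ + 1) * (((s / (2 * √(s * r)) : ℝ) : ℂ) *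
        ((√(s * r) : ℂ) ^ (2 * ℓ + 1) * Complex.exp (√(s * r) * ζ))) := by
        refine intervalIntegral.integral_congr_ae (ae_of_all _ fun r hr => ?_)
        rw [uIoc_of_le hh] at hr
        have hr' := congrArg ((↑) : ℝ → ℂ) (pow_eq_sqrt_mul_pow_two_mul_add_one hs hr.1 ℓ)
        push_cast at hr' ⊢
        rw [hr']
        ring
    _ = _ := by
        rw [intervalIntegral.integral_const_mul, integral_sqrt_mul_pow_mul_exp hζ hs hh,
          (odd_two_mul_add_one ℓ).neg_one_pow]
        ring

theorem integral_sqrt_mul_pow_div_sqrt_mul_exp_sqrt_mul {ζ : ℂ} (hζ : ζ ≠ 0) {s h : ℝ}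
    (hs : 0 < s) (hh : 0 ≤ h) (ℓ : ℕ) :
    ∫ r in (0:ℝ)..h, (√s : ℂ) * (r : ℂ) ^ ℓ / (√r : ℂ) * Complex.exp ((√(s * r) : ℂ) * ζ)
      = 2 / (s : ℂ) ^ ℓ *
        (-((2 * ℓ)! / ζ ^ (2 * ℓ + 1)) +
          Complex.exp (√(s * h) * ζ) *
            ∑ j ∈ Finset.range (2 * ℓ + 1),
              (-1) ^ j * (2 * ℓ)! / ((2 * ℓ - j)! * ζ ^ (j + 1)) *
                (√(s * h) : ℂ) ^ (2 * ℓ - j)) := by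
  calc _ = ∫ r in (0:ℝ)..h, 2 / (s : ℂ) ^ ℓ * (((s / (2 * √(s * r)) : ℝ) : ℂ) *
        ((√(s * r) : ℂ) ^ (2 * ℓ) * Complex.exp (√(s * r) * ζ))) := by
        refine intervalIntegral.integral_congr_ae (ae_of_all _ fun r hr => ?_)
        rw [uIoc_of_le hh] at hr
        have hr' := congrArg ((↑) : ℝ → ℂ)
          (sqrt_mul_pow_div_sqrt_eq_sqrt_mul_pow_two_mul hs hr.1 ℓ)
        push_cast at hr' ⊢
        rw [hr']
        ring
    _ = _ := by
        rw [intervalIntegral.integral_const_mul, integral_sqrt_mul_pow_mul_exp hζ hs hh,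
          (even_two_mul ℓ).neg_one_pow]
        ring

/-- Closed-form values of the integrals `∫₀ʰ rˡ e^{√(sr)ζ} dr` and
`∫₀ʰ rˡ⁻¹ᐟ² s¹ᐟ² e^{√(sr)ζ} dr` for `ζ ≠ 0`, `s, h > 0`. -/
theorem stmt15 (ζ : ℂ) (hζ : ζ ≠ 0) (s h : ℝ) (hs : 0 < s) (hh : 0 < h) (ℓ : ℕ) :
    (∫ r in (0:ℝ)..h, (r : ℂ) ^ ℓ * Complex.exp ((Real.sqrt (s * r) : ℂ) * ζ))
      = (2 / (s : ℂ) ^ (ℓ + 1)) *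
        (((2 * ℓ + 1)! : ℂ) / ζ ^ (2 * ℓ + 2) +
          Complex.exp ((Real.sqrt (s * h) : ℂ) * ζ) *
            ∑ j ∈ Finset.range (2 * ℓ + 2),
              (-1 : ℂ) ^ j * ((2 * ℓ + 1)! : ℂ) /
                (((2 * ℓ + 1 - j)! : ℂ) * ζ ^ (j + 1)) *
                  ((Real.sqrt (s * h) : ℂ)) ^ (2 * ℓ + 1 - j)) ∧
    (∫ r in (0:ℝ)..h,
        (Real.sqrt s : ℂ) * (r : ℂ) ^ ℓ / (Real.sqrt r : ℂ) *
          Complex.exp ((Real.sqrt (s * r) : ℂ) * ζ))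
      = (2 / (s : ℂ) ^ ℓ) *
        (-(((2 * ℓ)! : ℂ) / ζ ^ (2 * ℓ + 1)) +
          Complex.exp ((Real.sqrt (s * h) : ℂ) * ζ) *
            ∑ j ∈ Finset.range (2 * ℓ + 1),
              (-1 : ℂ) ^ j * ((2 * ℓ)! : ℂ) /
                (((2 * ℓ - j)! : ℂ) * ζ ^ (j + 1)) *
                  ((Real.sqrt (s * h) : ℂ)) ^ (2 * ℓ - j)) :=
  ⟨integral_ofReal_pow_mul_exp_sqrt_mul hζ hs hh.le ℓ,
    integral_sqrt_mul_pow_div_sqrt_mul_exp_sqrt_mul hζ hs hh.le ℓ⟩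
end

section
/- Let Ω, λ, u, h, Γ_h^−, Γ_h^+, ν⁻, ν⁺ be as in the context with α = 1/3, i.e., θ₀ = π/3. Suppose Γ_h^− and Γ_h^+ are generalized singular lines of u with constant parameters C₁, C₂ ∈ ℂ respectively, i.e., ∇u(x)·ν⁻ + C₁·u(x) = 0 for all x ∈ Γ_h^− and ∇u(x)·ν⁺ + C₂·u(x) = 0 for all x ∈ Γ_h^+. If C₁ ≠ C₂ and 1 + (4/(3λ))·(C₁² + C₁C₂ + C₂²) ≠ 0, then u(0) = 0. -/
/-!
Along a singular ray the function `∂_ν u + C u` is analytic and vanishes on a segment, so by the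
identity theorem it vanishes near `0` on the whole line; differentiating it twice along the ray
gives three linear relations between the Taylor coefficients of `u` at `0` of order at most three.
With the Helmholtz equation and its first derivatives at `0`, the two rays give nine linear
relations between the ten coefficients, and eliminating all but `u(0)` leaves
`(C₂ - C₁)(3λ + 4(C₁² + C₁C₂ + C₂²)) u(0) = 0`.
-/

open Filter Topology

section

variable {E F : Type*} [NormedAddCommGroup E] [NormedSpace ℝ E]
  [NormedAddCommGroup F] [NormedSpace ℝ F]

theorem fderiv_fun_clm_apply {G : Type*} [NormedAddCommGroup G] [NormedSpace ℝ G]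
    {c : E → G →L[ℝ] F} {x : E} (hc : DifferentiableAt ℝ c x) (v : G) (w : E) :
    fderiv ℝ (fun y => c y v) x w = fderiv ℝ c x w v := by
  simp [fderiv_clm_apply hc (differentiableAt_const v)]

theorem fderiv_fun_clm_apply_add_const_mul {c : E → E →L[ℝ] ℂ} {g : E → ℂ} {x : E}
    (hc : DifferentiableAt ℝ c x) (hg : DifferentiableAt ℝ g x) (C : ℂ) (n d : E) :
    fderiv ℝ (fun y => c y n + C * g y) x d = fderiv ℝ c x d n + C * fderiv ℝ g x d := by
  rw [fderiv_fun_add (hc.clm_apply (differentiableAt_const n)) (hg.const_mul C),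
    fderiv_const_mul hg]
  simp [fderiv_fun_clm_apply hc]

theorem AnalyticAt.fderiv_apply {u : E → ℂ} {x : E} (hu : AnalyticAt ℝ u x) (v : E) :
    AnalyticAt ℝ (fun y => fderiv ℝ u y v) x :=
  ((ContinuousLinearMap.apply ℝ ℂ v).analyticAt _).comp hu.fderiv

theorem AnalyticAt.fderiv_fderiv_comm [CompleteSpace F] {u : E → F} {x : E}
    (hu : AnalyticAt ℝ u x) (v w : E) :
    fderiv ℝ (fderiv ℝ u) x v w = fderiv ℝ (fderiv ℝ u) x w v :=
  hu.contDiffAt.isSymmSndFDerivAt_of_omega v w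

theorem AnalyticAt.fderiv_fderiv_fderiv_comm_left [CompleteSpace F] {u : E → F} {x : E}
    (hu : AnalyticAt ℝ u x) (a b c : E) :
    fderiv ℝ (fderiv ℝ (fderiv ℝ u)) x a b c = fderiv ℝ (fderiv ℝ (fderiv ℝ u)) x b a c := by
  rw [hu.fderiv.fderiv_fderiv_comm a b]

theorem AnalyticAt.fderiv_fderiv_fderiv_comm_right [CompleteSpace F] {u : E → F} {x : E}
    (hu : AnalyticAt ℝ u x) (a b c : E) :
    fderiv ℝ (fderiv ℝ (fderiv ℝ u)) x a b c = fderiv ℝ (fderiv ℝ (fderiv ℝ u)) x a c b := by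
  have hsymm : (fun y => fderiv ℝ (fderiv ℝ u) y b c) =ᶠ[𝓝 x]
      fun y => fderiv ℝ (fderiv ℝ u) y c b := by
    filter_upwards [hu.eventually_analyticAt] with y hy using hy.fderiv_fderiv_comm b c
  have hd : DifferentiableAt ℝ (fderiv ℝ (fderiv ℝ u)) x := hu.fderiv.fderiv.differentiableAt
  have happ : ∀ v w : E, fderiv ℝ (fun y => fderiv ℝ (fderiv ℝ u) y v w) x a
      = fderiv ℝ (fderiv ℝ (fderiv ℝ u)) x a v w := fun v w => by
    rw [fderiv_fun_clm_apply (c := fun y => fderiv ℝ (fderiv ℝ u) y v)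
      (hd.clm_apply (differentiableAt_const v)), fderiv_fun_clm_apply hd]
  rw [← happ, ← happ, hsymm.fderiv_eq]

theorem tendsto_smul_const_nhds_zero (d : E) : Tendsto (fun r : ℝ => r • d) (𝓝 0) (𝓝 0) := by
  simpa using (tendsto_id (x := 𝓝 (0 : ℝ))).smul_const d

theorem AnalyticAt.eventually_eq_zero_of_eq_zero_on_ray {f : E → F} (hf : AnalyticAt ℝ f 0)
    {h : ℝ} (hh : 0 < h) (d : E) (hz : ∀ r : ℝ, 0 ≤ r → r ≤ h → f (r • d) = 0) :
    ∀ᶠ r in 𝓝 (0 : ℝ), f (r • d) = 0 := by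
  have hg : AnalyticAt ℝ (fun r : ℝ => f (r • d)) 0 := by
    refine AnalyticAt.comp (g := f) ?_ (analyticAt_id.smul analyticAt_const)
    simpa using hf
  refine hg.frequently_zero_iff_eventually_zero.mp ?_
  have hpos : ∀ᶠ r in 𝓝[>] (0 : ℝ), f (r • d) = 0 := by
    filter_upwards [Ioo_mem_nhdsGT hh] with r hr using hz r hr.1.le hr.2.le
  exact hpos.frequently.filter_mono (nhdsWithin_mono 0 fun _ hr => ne_of_gt hr)

theorem eventually_fderiv_apply_eq_zero_of_eventually_eq_zero {f : E → F}
    (hf : ∀ᶠ x in 𝓝 (0 : E), DifferentiableAt ℝ f x) (d : E)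
    (hz : ∀ᶠ r in 𝓝 (0 : ℝ), f (r • d) = 0) :
    ∀ᶠ r in 𝓝 (0 : ℝ), fderiv ℝ f (r • d) d = 0 := by
  filter_upwards [hz.eventually_nhds, (tendsto_smul_const_nhds_zero d).eventually hf]
    with r hzr hfr
  have hl : HasDerivAt (fun ρ : ℝ => ρ • d) d r := by
    simpa using (hasDerivAt_id r).smul_const d
  have hderiv : HasDerivAt (fun ρ : ℝ => f (ρ • d)) (fderiv ℝ f (r • d) d) r :=
    hfr.hasFDerivAt.comp_hasDerivAt r hl
  exact hderiv.unique ((hasDerivAt_const r (0 : F)).congr_of_eventuallyEq hzr)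

theorem eventually_fderiv_boundary_eq_zero {c : E → E →L[ℝ] ℂ} {g : E → ℂ}
    (hc : ∀ᶠ x in 𝓝 (0 : E), DifferentiableAt ℝ c x)
    (hg : ∀ᶠ x in 𝓝 (0 : E), DifferentiableAt ℝ g x) (d n : E) (C : ℂ)
    (hz : ∀ᶠ r in 𝓝 (0 : ℝ), c (r • d) n + C * g (r • d) = 0) :
    ∀ᶠ r in 𝓝 (0 : ℝ), fderiv ℝ c (r • d) d n + C * fderiv ℝ g (r • d) d = 0 := by
  have hdiff : ∀ᶠ x in 𝓝 (0 : E), DifferentiableAt ℝ (fun y => c y n + C * g y) x := by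
    filter_upwards [hc, hg] with x hcx hgx
    exact (hcx.clm_apply (differentiableAt_const n)).add (hgx.const_mul C)
  filter_upwards [eventually_fderiv_apply_eq_zero_of_eventually_eq_zero hdiff d hz,
    (tendsto_smul_const_nhds_zero d).eventually (hc.and hg)] with r hr ⟨hcr, hgr⟩
  rwa [fderiv_fun_clm_apply_add_const_mul hcr hgr] at hr

theorem AnalyticAt.singular_ray_jet {u : E → ℂ} (hu : AnalyticAt ℝ u 0) {h : ℝ} (hh : 0 < h)
    (d n : E) (C : ℂ) (hbc : ∀ r : ℝ, 0 ≤ r → r ≤ h → fderiv ℝ u (r • d) n + C * u (r • d) = 0) :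
    fderiv ℝ u 0 n + C * u 0 = 0 ∧
    fderiv ℝ (fderiv ℝ u) 0 d n + C * fderiv ℝ u 0 d = 0 ∧
    fderiv ℝ (fderiv ℝ (fderiv ℝ u)) 0 d d n + C * fderiv ℝ (fderiv ℝ u) 0 d d = 0 := by
  have han := hu.eventually_analyticAt
  have hd₀ : ∀ᶠ x in 𝓝 (0 : E), DifferentiableAt ℝ u x := han.mono fun _ hx => hx.differentiableAt
  have hd₁ : ∀ᶠ x in 𝓝 (0 : E), DifferentiableAt ℝ (fderiv ℝ u) x :=
    han.mono fun _ hx => hx.fderiv.differentiableAt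
  have hd₂ : ∀ᶠ x in 𝓝 (0 : E), DifferentiableAt ℝ (fderiv ℝ (fderiv ℝ u)) x :=
    han.mono fun _ hx => hx.fderiv.fderiv.differentiableAt
  have hz₀ : ∀ᶠ r in 𝓝 (0 : ℝ), fderiv ℝ u (r • d) n + C * u (r • d) = 0 :=
    ((hu.fderiv_apply n).add (analyticAt_const.mul hu)).eventually_eq_zero_of_eq_zero_on_ray
      hh d hbc
  have hz₁ := eventually_fderiv_boundary_eq_zero hd₁ hd₀ d n C hz₀
  have hz₂ := eventually_fderiv_boundary_eq_zero
    (hd₂.mono fun _ hx => hx.clm_apply (differentiableAt_const d))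
    (hd₁.mono fun _ hx => hx.clm_apply (differentiableAt_const d)) d n C hz₁
  refine ⟨by simpa using hz₀.self_of_nhds, by simpa using hz₁.self_of_nhds, ?_⟩
  simpa [fderiv_fun_clm_apply hd₂.self_of_nhds, fderiv_fun_clm_apply hd₁.self_of_nhds]
    using hz₂.self_of_nhds

end

theorem helmholtz_jet {u : ℝ × ℝ → ℂ} (hu : AnalyticAt ℝ u 0) (lam : ℂ)
    (hpde : ∀ᶠ x in 𝓝 (0 : ℝ × ℝ), pd1 (pd1 u) x + pd2 (pd2 u) x + lam * u x = 0) :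
    fderiv ℝ (fderiv ℝ u) 0 (1, 0) (1, 0) + fderiv ℝ (fderiv ℝ u) 0 (0, 1) (0, 1)
        + lam * u 0 = 0 ∧
    ∀ v, fderiv ℝ (fderiv ℝ (fderiv ℝ u)) 0 v (1, 0) (1, 0)
        + fderiv ℝ (fderiv ℝ (fderiv ℝ u)) 0 v (0, 1) (0, 1) + lam * fderiv ℝ u 0 v = 0 := by
  set P := fun x => fderiv ℝ (fderiv ℝ u) x (1, 0) (1, 0) + fderiv ℝ (fderiv ℝ u) x (0, 1) (0, 1)
    + lam * u x
  have hP : P =ᶠ[𝓝 0] fun _ => 0 := by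
    filter_upwards [hpde, hu.eventually_analyticAt] with x hx hux
    have hd := hux.fderiv.differentiableAt
    have h₁ : pd1 (pd1 u) x = fderiv ℝ (fderiv ℝ u) x (1, 0) (1, 0) := fderiv_fun_clm_apply hd _ _
    have h₂ : pd2 (pd2 u) x = fderiv ℝ (fderiv ℝ u) x (0, 1) (0, 1) := fderiv_fun_clm_apply hd _ _
    rwa [h₁, h₂] at hx
  have hd2 := hu.fderiv.fderiv.differentiableAt
  refine ⟨hP.self_of_nhds, fun v => ?_⟩
  have hP' : fderiv ℝ P 0 v = 0 := by simp [hP.fderiv_eq]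
  rw [← hP', fderiv_fun_add, fderiv_fun_add, fderiv_const_mul hu.differentiableAt]
  · simp [fderiv_fun_clm_apply (hd2.clm_apply (differentiableAt_const _)),
      fderiv_fun_clm_apply hd2]
  all_goals fun_prop

theorem jet_relation_pi_div_three (a : ℂ) (L : ℝ × ℝ →L[ℝ] ℂ)
    (Q : ℝ × ℝ →L[ℝ] ℝ × ℝ →L[ℝ] ℂ) (T : ℝ × ℝ →L[ℝ] ℝ × ℝ →L[ℝ] ℝ × ℝ →L[ℝ] ℂ)
    (hQ : ∀ v w, Q v w = Q w v) (hT₁ : ∀ u v w, T u v w = T v u w)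
    (hT₂ : ∀ u v w, T u v w = T u w v) (lam C₁ C₂ : ℂ)
    (h₁ : L (0, -1) + C₁ * a = 0 ∧ Q (1, 0) (0, -1) + C₁ * L (1, 0) = 0 ∧
      T (1, 0) (1, 0) (0, -1) + C₁ * Q (1, 0) (1, 0) = 0)
    (h₂ : L (-(√3 / 2), 1 / 2) + C₂ * a = 0 ∧
      Q (1 / 2, √3 / 2) (-(√3 / 2), 1 / 2) + C₂ * L (1 / 2, √3 / 2) = 0 ∧
      T (1 / 2, √3 / 2) (1 / 2, √3 / 2) (-(√3 / 2), 1 / 2)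
        + C₂ * Q (1 / 2, √3 / 2) (1 / 2, √3 / 2) = 0)
    (hpde₀ : Q (1, 0) (1, 0) + Q (0, 1) (0, 1) + lam * a = 0)
    (hpde₁ : ∀ v, T v (1, 0) (1, 0) + T v (0, 1) (0, 1) + lam * L v = 0) :
    (C₂ - C₁) * (3 * lam + 4 * (C₁ ^ 2 + C₁ * C₂ + C₂ ^ 2)) * a = 0 := by
  obtain ⟨l₁, l₂, l₃⟩ := h₁
  obtain ⟨m₁, m₂, m₃⟩ := h₂
  have p₁ := hpde₁ (1, 0)
  have p₂ := hpde₁ (0, 1)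
  set e₁ : ℝ × ℝ := (1, 0)
  set e₂ : ℝ × ℝ := (0, 1)
  have hv : ∀ x y : ℝ, ((x, y) : ℝ × ℝ) = x • e₁ + y • e₂ := fun x y => by simp [e₁, e₂]
  simp only [hv, map_add, map_smul, add_apply, smul_apply, Complex.real_smul, hQ e₂ e₁,
    hT₁ e₂ e₁ e₁, hT₂ e₁ e₂ e₁, hT₁ e₂ e₁ e₂, hT₂ e₂ e₂ e₁, Complex.ofReal_neg, Complex.ofReal_div,
    Complex.ofReal_one, Complex.ofReal_zero, Complex.ofReal_ofNat] at l₁ l₂ l₃ m₁ m₂ m₃ p₁ p₂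
  set S : ℂ := ((√3 : ℝ) : ℂ)
  have hS : S ^ 2 = 3 := by
    rw [← Complex.ofReal_pow, Real.sq_sqrt (by norm_num : (0 : ℝ) ≤ 3)]
    norm_num
  -- `hp` and `hA` express `∂₁u(0)` and `∂₁²u(0)` through `u(0)`; the final combination
  -- eliminates the third-order coefficients.
  have hp : S * L e₁ = (C₁ + 2 * C₂) * a := by linear_combination -2 * m₁ - l₁
  have hA : 6 * Q e₁ e₁ = (4 * C₂ ^ 2 + 4 * C₁ * C₂ - 2 * C₁ ^ 2 - 3 * lam) * a := by
    linear_combination -4 * S * m₂ + (Q e₂ e₂ - Q e₁ e₁ + 2 * C₂ * L e₂ - S * Q e₁ e₂) * hS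
      + 3 * hpde₀ + 2 * S * l₂ + 2 * (C₂ - C₁) * hp - 6 * C₂ * l₁
  linear_combination -12 * m₃
    + (3 / 2) * (-2 * T e₁ e₁ e₂ - S * T e₁ e₂ e₂ + T e₂ e₂ e₂ + 2 * C₂ * Q e₂ e₂) * hS
    - (3 / 2) * S * p₁ + (9 / 2) * p₂ + 12 * l₃ - 6 * S * C₂ * l₂ + 9 * C₂ * hpde₀
    + (9 / 2) * lam * l₁ + (3 / 2) * (lam + 4 * C₁ * C₂) * hp - ((8 * C₁ + 4 * C₂) / 4) * hA

/-- Two generalized singular lines with constant parameters `C₁ ≠ C₂` intersecting at the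
origin at the angle `θ₀ = π/3` (i.e. `α = 1/3`): if `1 + (4/(3λ))(C₁² + C₁C₂ + C₂²) ≠ 0`,
then `u(0) = 0`. -/
theorem stmt19
    (Ω : Set (ℝ × ℝ)) (hΩ : IsOpen Ω)
    (lam : ℝ) (hlam : 0 < lam)
    (u : ℝ × ℝ → ℂ)
    (hu_an : AnalyticOnNhd ℝ u Ω)
    (hu_eq : ∀ x ∈ Ω, pd1 (pd1 u) x + pd2 (pd2 u) x + (lam : ℂ) * u x = 0)
    (θ₀ : ℝ) (hθ₀ : θ₀ = (1 / 3 : ℝ) * Real.pi)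
    (h : ℝ) (hh : 0 < h)
    (hdisk : ∀ x : ℝ × ℝ, x.1 ^ 2 + x.2 ^ 2 ≤ h ^ 2 → x ∈ Ω)
    (C₁ C₂ : ℂ)
    (hbc₁ : ∀ r : ℝ, 0 ≤ r → r ≤ h →
      fderiv ℝ u (r, 0) (0, -1) + C₁ * u (r, 0) = 0)
    (hbc₂ : ∀ r : ℝ, 0 ≤ r → r ≤ h →
      fderiv ℝ u (r * Real.cos θ₀, r * Real.sin θ₀) (-Real.sin θ₀, Real.cos θ₀)
        + C₂ * u (r * Real.cos θ₀, r * Real.sin θ₀) = 0)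
    (hC : C₁ ≠ C₂)
    (hgen : (1 : ℂ) + (4 / (3 * (lam : ℂ))) * (C₁ ^ 2 + C₁ * C₂ + C₂ ^ 2) ≠ 0) :
    u (0, 0) = 0 := by
  have h0 : (0 : ℝ × ℝ) ∈ Ω := hdisk 0 (by simp; positivity)
  have hu : AnalyticAt ℝ u 0 := hu_an 0 h0
  have hθ : θ₀ = Real.pi / 3 := by rw [hθ₀]; ring
  have line₁ := hu.singular_ray_jet hh (1, 0) (0, -1) C₁ fun r h0r hrh => by
    simpa using hbc₁ r h0r hrh
  have line₂ := hu.singular_ray_jet hh (1 / 2, √3 / 2) (-(√3 / 2), 1 / 2) C₂ fun r h0r hrh => by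
    simpa [hθ] using hbc₂ r h0r hrh
  have helm := helmholtz_jet hu lam (eventually_of_mem (hΩ.mem_nhds h0) hu_eq)
  have key := jet_relation_pi_div_three (u 0) _ _ _ hu.fderiv_fderiv_comm
    hu.fderiv_fderiv_fderiv_comm_left hu.fderiv_fderiv_fderiv_comm_right lam C₁ C₂
    line₁ line₂ helm.1 helm.2
  have hlam' : (lam : ℂ) ≠ 0 := Complex.ofReal_ne_zero.mpr hlam.ne'
  have hK : 3 * (lam : ℂ) + 4 * (C₁ ^ 2 + C₁ * C₂ + C₂ ^ 2) ≠ 0 := by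
    contrapose! hgen
    field_simp
    linear_combination hgen
  exact (mul_eq_zero.mp key).resolve_left (mul_ne_zero (sub_ne_zero.mpr hC.symm) hK)
end
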